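/- Let Φ = K_{a,b}^φ (a, b ≥ 2) be a quaternion unit gain complete bipartite graph. Then the row left rank of A(Φ) equals 2 if and only if every induced 4-cycle C₄^φ in Φ has gain product equal to 1 (i.e., is of Type 1). -/

import Mathlib

/-- The row left rank of a quaternion matrix: the rank (dimension of the span, with
quaternion scalars acting on the left) of the set of rows of `A`. -/
noncomputable def rowLeftRank {m n : Type*} (A : Matrix m n (Quaternion ℝ)) : ℕ :=
  (Module.rank (Quaternion ℝ)
    (Submodule.span (Quaternion ℝ) (Set.range (fun i j => A i j)))).toNat

/-- The row right rank: scalars act on the right, i.e. over the opposite ring. -/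
noncomputable def rowRightRank {m n : Type*} (A : Matrix m n (Quaternion ℝ)) : ℕ :=
  (Module.rank (Quaternion ℝ)ᵐᵒᵖ
    (Submodule.span (Quaternion ℝ)ᵐᵒᵖ (Set.range (fun i j => A i j)))).toNat

/-- The column right rank: the span of the columns with scalars acting on the right. -/
noncomputable def colRightRank {m n : Type*} (A : Matrix m n (Quaternion ℝ)) : ℕ :=
  (Module.rank (Quaternion ℝ)ᵐᵒᵖ
    (Submodule.span (Quaternion ℝ)ᵐᵒᵖ (Set.range (fun j i => A i j)))).toNat

/-- A quaternion unit gain graph on vertex type `V`. -/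
structure QuaternionUnitGainGraph (V : Type*) where
  G : SimpleGraph V
  gain : V → V → Quaternion ℝ
  gain_unit : ∀ u v, G.Adj u v → ‖gain u v‖ = 1
  gain_inv : ∀ u v, G.Adj u v → gain v u = star (gain u v)
  gain_zero : ∀ u v, ¬ G.Adj u v → gain u v = 0

/-- The (Hermitian, quaternion) adjacency matrix of a quaternion unit gain graph. -/
def QuaternionUnitGainGraph.adjMatrix {V : Type*} (Φ : QuaternionUnitGainGraph V) :
    Matrix V V (Quaternion ℝ) := fun u v => Φ.gain u v

/-- The row left rank of a quaternion unit gain graph. -/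
noncomputable def QuaternionUnitGainGraph.rank {V : Type*} (Φ : QuaternionUnitGainGraph V) : ℕ :=
  rowLeftRank Φ.adjMatrix

/-!
In the complete bipartite case the adjacency matrix is the block matrix `[[0, B], [B⁻ᵀ, 0]]`,
where `B u v` is the gain of the edge `u v` and `B⁻ᵀ` is the transposed matrix of entrywise
inverses (inverse = conjugate for unit quaternions). Its row rank is the sum of the row ranks of
the two blocks, each at least one, so the rank is two iff both blocks have rank one. If every
4-cycle has gain one, then `B u v = B u v₀ B(u₀, v₀)⁻¹ B u₀ v` factors as `x u * y v`, so both
blocks have rank one; conversely a 4-cycle `u₁ v₁ u₂ v₂` of gain different from one makes the rows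
`u₁`, `u₂` of `B` left linearly independent. Only division-ring arithmetic is used.
-/

open Module Submodule Matrix Set

theorem Submodule.finrank_prod {K M N : Type*} [DivisionRing K] [AddCommGroup M] [Module K M]
    [AddCommGroup N] [Module K N] (p : Submodule K M) (q : Submodule K N) [Module.Finite K p]
    [Module.Finite K q] :
    finrank K (p.prod q) = finrank K p + finrank K q := by
  rw [← p.range_subtype, ← q.range_subtype, ← LinearMap.range_prodMap,
    LinearMap.finrank_range_of_inj (p.injective_subtype.prodMap q.injective_subtype),
    Module.finrank_prod, p.range_subtype, q.range_subtype]

section RowRank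

variable {K m n : Type*} [DivisionRing K]

theorem finrank_span_range_fromBlocks_zero_zero [Finite m] [Finite n] (B : Matrix m n K)
    (C : Matrix n m K) :
    finrank K (span K (range (fromBlocks 0 B C 0))) =
      finrank K (span K (range B)) + finrank K (span K (range C)) := by
  let e : (m ⊕ n → K) →ₗ[K] (m → K) × (n → K) := LinearEquiv.sumArrowLequivProdArrow m n K K
  have hrows : e ∘ fromBlocks 0 B C 0 =
      Sum.elim (LinearMap.inr K _ _ ∘ B) (LinearMap.inl K _ _ ∘ C) := by
    ext (u | v) <;> rfl
  have himage : e '' range (fromBlocks 0 B C 0) =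
      LinearMap.inl K _ _ '' range C ∪ LinearMap.inr K _ _ '' range B :=
    calc e '' range (fromBlocks 0 B C 0) = range (e ∘ fromBlocks 0 B C 0) := (range_comp _ _).symm
      _ = range (LinearMap.inr K _ _ ∘ B) ∪ range (LinearMap.inl K _ _ ∘ C) := by
        rw [hrows, Set.Sum.elim_range]
      _ = _ := by
        rw [union_comm]
        exact congrArg₂ (· ∪ ·) (range_comp _ _) (range_comp _ _)
  rw [← (LinearEquiv.sumArrowLequivProdArrow m n K K).finrank_map_eq, map_span, himage,
    LinearMap.span_inl_union_inr, Submodule.finrank_prod, add_comm]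

theorem one_le_finrank_span_range [Finite n] {B : Matrix m n K} {u : m} {v : n}
    (h : B u v ≠ 0) : 1 ≤ finrank K (span K (range B)) := by
  rw [Submodule.one_le_finrank_iff, Ne, span_eq_bot]
  exact fun hzero => h (congrFun (hzero _ ⟨u, rfl⟩) v)

theorem finrank_span_range_le_one_of_eq_mul [Finite n] {B : Matrix m n K} (x : m → K)
    (y : n → K) (hB : ∀ u v, B u v = x u * y v) : finrank K (span K (range B)) ≤ 1 := by
  have hrange : range B ⊆ K ∙ y := by
    rintro _ ⟨u, rfl⟩
    exact mem_span_singleton.mpr ⟨x u, funext fun v => (hB u v).symm⟩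
  exact (Submodule.finrank_mono (span_le.mpr hrange)).trans
    ((finrank_span_le_card {y}).trans (by simp))

theorem linearIndependent_pair_of_cycle_ne_one {B : Matrix m n K} (hB : ∀ u v, B u v ≠ 0)
    {u₁ u₂ : m} {v₁ v₂ : n} (hcycle : B u₁ v₁ * (B u₂ v₁)⁻¹ * B u₂ v₂ * (B u₁ v₂)⁻¹ ≠ 1) :
    LinearIndependent K ![B u₁, B u₂] := by
  rw [LinearIndependent.pair_iff]
  intro s t hst
  have hv : ∀ v, s * B u₁ v = -(t * B u₂ v) := fun v =>
    eq_neg_of_add_eq_zero_left (congrFun hst v)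
  by_cases ht : t = 0
  · subst ht
    simpa [hB] using hv v₁
  have hs : s ≠ 0 := by
    rintro rfl
    simpa [ht, hB] using hv v₁
  have hratio : ∀ v, B u₁ v * (B u₂ v)⁻¹ = -(s⁻¹ * t) := fun v =>
    calc B u₁ v * (B u₂ v)⁻¹ = s⁻¹ * (s * B u₁ v) * (B u₂ v)⁻¹ := by
          rw [← mul_assoc, inv_mul_cancel₀ hs, one_mul]
      _ = -(s⁻¹ * t) := by rw [hv, mul_neg, neg_mul, mul_assoc, mul_inv_cancel_right₀ (hB u₂ v)]
  refine absurd ?_ hcycle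
  rw [hratio v₁, ← hratio v₂, mul_assoc, mul_assoc, ← mul_assoc (B u₂ v₂)⁻¹,
    inv_mul_cancel₀ (hB u₂ v₂), one_mul, mul_inv_cancel₀ (hB u₁ v₂)]

theorem two_le_finrank_span_range_of_cycle_ne_one [Finite n] {B : Matrix m n K}
    (hB : ∀ u v, B u v ≠ 0) {u₁ u₂ : m} {v₁ v₂ : n}
    (hcycle : B u₁ v₁ * (B u₂ v₁)⁻¹ * B u₂ v₂ * (B u₁ v₂)⁻¹ ≠ 1) :
    2 ≤ finrank K (span K (range B)) := by
  have hrows : range ![B u₁, B u₂] ⊆ range B := by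
    rintro _ ⟨i, rfl⟩
    fin_cases i <;> exact ⟨_, rfl⟩
  calc 2 = finrank K (span K (range ![B u₁, B u₂])) := by
        rw [finrank_span_eq_card (linearIndependent_pair_of_cycle_ne_one hB hcycle),
          Fintype.card_fin]
    _ ≤ _ := Submodule.finrank_mono (span_mono hrows)

theorem eq_mul_of_cycle_eq_one {B : Matrix m n K} (hB : ∀ u v, B u v ≠ 0)
    (hcycle : ∀ u₁ u₂ v₁ v₂, u₁ ≠ u₂ → v₁ ≠ v₂ →
      B u₁ v₁ * (B u₂ v₁)⁻¹ * B u₂ v₂ * (B u₁ v₂)⁻¹ = 1)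
    (u₀ : m) (v₀ : n) (u : m) (v : n) : B u v = B u v₀ * (B u₀ v₀)⁻¹ * B u₀ v := by
  by_cases hu : u = u₀
  · rw [hu, mul_inv_cancel₀ (hB u₀ v₀), one_mul]
  by_cases hv : v = v₀
  · rw [hv, inv_mul_cancel_right₀ (hB u₀ v₀)]
  exact ((mul_inv_eq_one₀ (hB u v)).mp (hcycle u u₀ v₀ v hu (Ne.symm hv))).symm

theorem finrank_span_range_fromBlocks_eq_two_iff [Finite m] [Finite n] [Nonempty m]
    [Nonempty n] {B : Matrix m n K} (hB : ∀ u v, B u v ≠ 0) :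
    finrank K (span K (range (fromBlocks 0 B (Bᵀ.map (·⁻¹)) 0))) = 2 ↔
      ∀ u₁ u₂ v₁ v₂, u₁ ≠ u₂ → v₁ ≠ v₂ → B u₁ v₁ * (B u₂ v₁)⁻¹ * B u₂ v₂ * (B u₁ v₂)⁻¹ = 1 := by
  obtain ⟨u₀⟩ := ‹Nonempty m›
  obtain ⟨v₀⟩ := ‹Nonempty n›
  have hB₁ : 1 ≤ finrank K (span K (range B)) := one_le_finrank_span_range (hB u₀ v₀)
  have hC₁ : 1 ≤ finrank K (span K (range (Bᵀ.map (·⁻¹)))) :=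
    one_le_finrank_span_range (u := v₀) (v := u₀) (inv_ne_zero (hB u₀ v₀))
  rw [finrank_span_range_fromBlocks_zero_zero]
  constructor
  · intro h u₁ u₂ v₁ v₂ _ _
    by_contra hcycle
    have := two_le_finrank_span_range_of_cycle_ne_one hB hcycle
    omega
  · intro hcycle
    have hfactor := eq_mul_of_cycle_eq_one hB hcycle u₀ v₀
    have hB_le := finrank_span_range_le_one_of_eq_mul _ _ hfactor
    have hC_le : finrank K (span K (range (Bᵀ.map (·⁻¹)))) ≤ 1 :=
      finrank_span_range_le_one_of_eq_mul (fun v => (B u₀ v)⁻¹)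
        (fun u => (B u v₀ * (B u₀ v₀)⁻¹)⁻¹) fun v u => by
          rw [map_apply, transpose_apply, hfactor u v, _root_.mul_inv_rev]
    omega

end RowRank

theorem Quaternion.star_eq_inv_of_norm_eq_one {q : Quaternion ℝ} (hq : ‖q‖ = 1) :
    star q = q⁻¹ := by
  refine eq_inv_of_mul_eq_one_left ?_
  rw [Quaternion.star_mul_self, Quaternion.normSq_eq_norm_mul_self, hq, mul_one,
    Quaternion.coe_one]

namespace QuaternionUnitGainGraph

theorem rank_eq_finrank {V : Type*} (Φ : QuaternionUnitGainGraph V) :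
    Φ.rank = finrank (Quaternion ℝ) (span (Quaternion ℝ) (range Φ.adjMatrix)) :=
  rfl

variable {V₁ V₂ : Type*}

def biadjMatrix (Φ : QuaternionUnitGainGraph (V₁ ⊕ V₂)) : Matrix V₁ V₂ (Quaternion ℝ) :=
  of fun u v => Φ.gain (.inl u) (.inr v)

variable {Φ : QuaternionUnitGainGraph (V₁ ⊕ V₂)} (hG : Φ.G = completeBipartiteGraph V₁ V₂)
include hG

theorem gain_inl_inr_ne_zero (u : V₁) (v : V₂) : Φ.gain (.inl u) (.inr v) ≠ 0 := by
  refine norm_ne_zero_iff.mp ?_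
  rw [Φ.gain_unit _ _ (by simp [hG])]
  exact one_ne_zero

theorem gain_inr_inl (u : V₁) (v : V₂) :
    Φ.gain (.inr v) (.inl u) = (Φ.gain (.inl u) (.inr v))⁻¹ := by
  have hadj : Φ.G.Adj (.inl u) (.inr v) := by simp [hG]
  rw [Φ.gain_inv _ _ hadj, Quaternion.star_eq_inv_of_norm_eq_one (Φ.gain_unit _ _ hadj)]

theorem adjMatrix_eq_fromBlocks :
    Φ.adjMatrix = fromBlocks 0 Φ.biadjMatrix (Φ.biadjMatrixᵀ.map (·⁻¹)) 0 := by
  refine Matrix.ext fun i j => ?_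
  rcases i with u | v <;> rcases j with u' | v'
  · exact Φ.gain_zero (.inl u) (.inl u') (by simp [hG])
  · rfl
  · exact gain_inr_inl hG u' v
  · exact Φ.gain_zero (.inr v) (.inr v') (by simp [hG])

end QuaternionUnitGainGraph

/-- For a quaternion unit gain complete bipartite graph `K_{a,b}` with `a, b ≥ 2`,
the row left rank is 2 iff every 4-cycle has gain 1 (is of Type 1). -/
theorem gain_completeBipartite_rank_eq_two_iff {V₁ V₂ : Type*}
    [Fintype V₁] [Fintype V₂] (ha : 2 ≤ Fintype.card V₁) (hb : 2 ≤ Fintype.card V₂)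
    (Φ : QuaternionUnitGainGraph (V₁ ⊕ V₂))
    (hG : Φ.G = completeBipartiteGraph V₁ V₂) :
    Φ.rank = 2 ↔
      ∀ (u₁ u₂ : V₁) (v₁ v₂ : V₂), u₁ ≠ u₂ → v₁ ≠ v₂ →
        Φ.gain (Sum.inl u₁) (Sum.inr v₁) * Φ.gain (Sum.inr v₁) (Sum.inl u₂) *
          Φ.gain (Sum.inl u₂) (Sum.inr v₂) * Φ.gain (Sum.inr v₂) (Sum.inl u₁) = 1 := by
  have : Nonempty V₁ := Fintype.card_pos_iff.mp (by omega)
  have : Nonempty V₂ := Fintype.card_pos_iff.mp (by omega)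
  rw [Φ.rank_eq_finrank, QuaternionUnitGainGraph.adjMatrix_eq_fromBlocks hG]
  refine (finrank_span_range_fromBlocks_eq_two_iff (B := Φ.biadjMatrix)
    (QuaternionUnitGainGraph.gain_inl_inr_ne_zero hG)).trans ?_
  simp only [QuaternionUnitGainGraph.biadjMatrix, of_apply,
    QuaternionUnitGainGraph.gain_inr_inl hG]
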